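/- Every reflexive symmetric quantum relation on a full matrix algebra arises from a channel restricted to a subalgebra: let M ⊆ M_m(ℂ) be a unital *-subalgebra and R ⊆ M_m(ℂ) a subspace with M' · R · M' ⊆ R, R† = R, and M' ⊆ R. Suppose there exists a trace-preserving completely positive ψ : M_m(ℂ) → M_n(ℂ) whose Kraus operator space T_ψ satisfies T_ψ† · T_ψ = R. Then the restriction φ = ψ ∘ ι to M (ι the inclusion) is trace-preserving completely positive and its operator space T_φ = T_ψ · M' satisfies T_φ† · T_φ = R. -/

import Mathlib

open Matrix ComplexOrder

/-- Span of elementwise products of two subspaces of matrices. -/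
noncomputable def mulS {a b c : Type*} [Fintype b] (T : Submodule ℂ (Matrix a b ℂ))
    (S : Submodule ℂ (Matrix b c ℂ)) : Submodule ℂ (Matrix a c ℂ) :=
  Submodule.span ℂ {x | ∃ t ∈ T, ∃ s ∈ S, x = t * s}

/-- The adjoint (conjugate-transpose) of a subspace of matrices. -/
noncomputable def dag {a b : Type*} (T : Submodule ℂ (Matrix a b ℂ)) :
    Submodule ℂ (Matrix b a ℂ) :=
  Submodule.span ℂ {x | ∃ t ∈ T, x = tᴴ}

/-- The commutant of a *-subalgebra of matrices, as a subspace. -/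
noncomputable def commMod {m : ℕ} (M : StarSubalgebra ℂ (Matrix (Fin m) (Fin m) ℂ)) :
    Submodule ℂ (Matrix (Fin m) (Fin m) ℂ) where
  carrier := {x | ∀ a ∈ M, x * a = a * x}
  add_mem' := fun hx hy a ha => by rw [add_mul, mul_add, hx a ha, hy a ha]
  zero_mem' := fun a ha => by rw [zero_mul, mul_zero]
  smul_mem' := fun c x hx a ha => by rw [smul_mul_assoc, hx a ha, mul_smul_comm]

lemma mul_mem_mulS {a b c : Type*} [Fintype b] {T : Submodule ℂ (Matrix a b ℂ)}
    {S : Submodule ℂ (Matrix b c ℂ)} {t s} (ht : t ∈ T) (hs : s ∈ S) :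
    t * s ∈ mulS T S :=
  Submodule.subset_span ⟨t, ht, s, hs, rfl⟩

lemma mulS_le {a b c : Type*} [Fintype b] {T : Submodule ℂ (Matrix a b ℂ)}
    {S : Submodule ℂ (Matrix b c ℂ)} {W : Submodule ℂ (Matrix a c ℂ)}
    (h : ∀ t ∈ T, ∀ s ∈ S, t * s ∈ W) : mulS T S ≤ W := by
  rw [mulS, Submodule.span_le]
  rintro x ⟨t, ht, s, hs, rfl⟩
  exact h t ht s hs

lemma mulS_induction {a b c : Type*} [Fintype b] {T : Submodule ℂ (Matrix a b ℂ)}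
    {S : Submodule ℂ (Matrix b c ℂ)} {p : Matrix a c ℂ → Prop}
    (mem : ∀ t ∈ T, ∀ s ∈ S, p (t * s)) (zero : p 0)
    (add : ∀ x y, p x → p y → p (x + y)) (smul : ∀ (r : ℂ) x, p x → p (r • x))
    {x} (hx : x ∈ mulS T S) : p x := by
  induction hx using Submodule.span_induction with
  | mem x h => obtain ⟨t, ht, s, hs, rfl⟩ := h; exact mem t ht s hs
  | zero => exact zero
  | add x y _ _ hx hy => exact add x y hx hy
  | smul r x _ hx => exact smul r x hx

lemma mem_dag {a b : Type*} {T : Submodule ℂ (Matrix a b ℂ)} {x : Matrix b a ℂ} :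
    x ∈ dag T ↔ xᴴ ∈ T := by
  constructor
  · intro hx
    induction hx using Submodule.span_induction with
    | mem x h => obtain ⟨t, ht, rfl⟩ := h; simpa using ht
    | zero => simpa using T.zero_mem
    | add x y _ _ hx hy => rw [conjTranspose_add]; exact T.add_mem hx hy
    | smul r x _ hx => rw [conjTranspose_smul]; exact T.smul_mem _ hx
  · intro h
    exact Submodule.subset_span ⟨xᴴ, h, by simp⟩

lemma mulS_assoc {a b c d : Type*} [Fintype b] [Fintype c]
    (T : Submodule ℂ (Matrix a b ℂ)) (S : Submodule ℂ (Matrix b c ℂ))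
    (U : Submodule ℂ (Matrix c d ℂ)) :
    mulS (mulS T S) U = mulS T (mulS S U) := by
  apply le_antisymm
  · refine mulS_le fun x hx u hu => ?_
    refine mulS_induction (p := fun x => x * u ∈ mulS T (mulS S U)) ?_ ?_ ?_ ?_ hx
    · intro t ht s hs; rw [Matrix.mul_assoc]; exact mul_mem_mulS ht (mul_mem_mulS hs hu)
    · simpa using Submodule.zero_mem _
    · intro x y hx hy; rw [Matrix.add_mul]; exact Submodule.add_mem _ hx hy
    · intro r x hx; rw [Matrix.smul_mul]; exact Submodule.smul_mem _ _ hx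
  · refine mulS_le fun t ht x hx => ?_
    refine mulS_induction (p := fun x => t * x ∈ mulS (mulS T S) U) ?_ ?_ ?_ ?_ hx
    · intro s hs u hu; rw [← Matrix.mul_assoc]; exact mul_mem_mulS (mul_mem_mulS ht hs) hu
    · simpa using Submodule.zero_mem _
    · intro x y hx hy; rw [Matrix.mul_add]; exact Submodule.add_mem _ hx hy
    · intro r x hx; rw [Matrix.mul_smul]; exact Submodule.smul_mem _ _ hx

lemma dag_mulS {a b c : Type*} [Fintype b] (T : Submodule ℂ (Matrix a b ℂ))
    (S : Submodule ℂ (Matrix b c ℂ)) :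
    dag (mulS T S) = mulS (dag S) (dag T) := by
  apply le_antisymm
  · intro x hx
    rw [mem_dag] at hx
    have : ∀ y ∈ mulS T S, yᴴ ∈ mulS (dag S) (dag T) := by
      intro y hy
      refine mulS_induction (p := fun y => yᴴ ∈ mulS (dag S) (dag T)) ?_ ?_ ?_ ?_ hy
      · intro t ht s hs
        rw [conjTranspose_mul]
        exact mul_mem_mulS (mem_dag.mpr (by simpa)) (mem_dag.mpr (by simpa))
      · simpa using Submodule.zero_mem _
      · intro x y hx hy; rw [conjTranspose_add]; exact Submodule.add_mem _ hx hy
      · intro r x hx; rw [conjTranspose_smul]; exact Submodule.smul_mem _ _ hx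
    simpa using this xᴴ hx
  · refine mulS_le fun s hs t ht => ?_
    rw [mem_dag, conjTranspose_mul]
    exact mul_mem_mulS (mem_dag.mp ht) (mem_dag.mp hs)

lemma dag_commMod {m : ℕ} (M : StarSubalgebra ℂ (Matrix (Fin m) (Fin m) ℂ)) :
    dag (commMod M) = commMod M := by
  have key : ∀ x : Matrix (Fin m) (Fin m) ℂ, x ∈ commMod M → xᴴ ∈ commMod M := by
    intro x hx a ha
    have := hx aᴴ (star_mem ha)
    calc xᴴ * a = (aᴴ * x)ᴴ := by simp
    _ = (x * aᴴ)ᴴ := by rw [this]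
    _ = a * xᴴ := by simp
  ext x
  rw [mem_dag]
  constructor
  · intro h; simpa using key _ h
  · exact key x

lemma one_mem_commMod {m : ℕ} (M : StarSubalgebra ℂ (Matrix (Fin m) (Fin m) ℂ)) :
    (1 : Matrix (Fin m) (Fin m) ℂ) ∈ commMod M := fun a _ => by rw [one_mul, mul_one]

lemma psd_sum {d : Type*} [Fintype d] {ι : Type*} (s : Finset ι)
    (f : ι → Matrix d d ℂ) (h : ∀ i ∈ s, (f i).PosSemidef) :
    (∑ i ∈ s, f i).PosSemidef := by
  constructor
  · show _ = _
    rw [conjTranspose_sum]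
    exact Finset.sum_congr rfl fun i hi => (h i hi).1
  · intro x
    have h0 : (∑ i ∈ s, f i) *ᵥ x = ∑ i ∈ s, f i *ᵥ x := by
      ext j
      simp only [mulVec, dotProduct, Matrix.sum_apply, Finset.sum_apply, Finset.sum_mul]
      exact Finset.sum_comm
    have h1 : star x ⬝ᵥ ((∑ i ∈ s, f i) *ᵥ x) = ∑ i ∈ s, star x ⬝ᵥ (f i *ᵥ x) := by
      rw [h0]
      simp only [dotProduct, Finset.sum_apply, Finset.mul_sum]
      exact Finset.sum_comm
    have h2 : 0 ≤ star ⇑x ⬝ᵥ ((∑ i ∈ s, f i) *ᵥ ⇑x) := by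
      rw [h1]
      exact Finset.sum_nonneg fun i hi => (h i hi).dotProduct_mulVec_nonneg x
    simpa [dotProduct, mulVec, Finsupp.sum_fintype, Finset.mul_sum, mul_assoc] using h2

/-- Let M ⊆ M_m(ℂ) be a unital *-subalgebra, R a reflexive symmetric
quantum relation on M (M'-bimodule, R† = R, M' ⊆ R), and ψ a trace-preserving
completely positive map, given by Kraus operators v with Σ vᵢ†vᵢ = 1, whose Kraus
operator space T_ψ = span{vᵢ} satisfies T_ψ† · T_ψ = R. Then the restriction
φ = ψ ∘ ι is trace-preserving and completely positive, and its Kraus operator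
space T_φ = T_ψ · M' satisfies T_φ† · T_φ = R. -/
theorem stmt13 {m n k : ℕ}
    (M : StarSubalgebra ℂ (Matrix (Fin m) (Fin m) ℂ))
    (R : Submodule ℂ (Matrix (Fin m) (Fin m) ℂ))
    (hRbimod : ∀ a r a', a ∈ commMod M → r ∈ R → a' ∈ commMod M → a * r * a' ∈ R)
    (hRsa : dag R = R)
    (hRrefl : commMod M ≤ R)
    (ψ : Matrix (Fin m) (Fin m) ℂ → Matrix (Fin n) (Fin n) ℂ)
    (v : Fin k → Matrix (Fin n) (Fin m) ℂ)
    (hψ : ∀ a, ψ a = ∑ i, v i * a * (v i)ᴴ)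
    (hTP : ∑ i, (v i)ᴴ * v i = 1)
    (hT : mulS (dag (Submodule.span ℂ (Set.range v))) (Submodule.span ℂ (Set.range v)) = R) :
    (∀ a : M, (ψ (a : Matrix (Fin m) (Fin m) ℂ)).trace
      = (a : Matrix (Fin m) (Fin m) ℂ).trace) ∧
    (∀ (l : ℕ) (B : Matrix (Fin l) (Fin l) M),
      (Matrix.of fun (p q : Fin l × Fin m) =>
        (B p.1 q.1 : Matrix (Fin m) (Fin m) ℂ) p.2 q.2).PosSemidef →
      (Matrix.of fun (p q : Fin l × Fin n) =>
        (ψ (B p.1 q.1 : Matrix (Fin m) (Fin m) ℂ)) p.2 q.2).PosSemidef) ∧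
    mulS (dag (mulS (Submodule.span ℂ (Set.range v)) (commMod M)))
      (mulS (Submodule.span ℂ (Set.range v)) (commMod M)) = R := by
  refine ⟨?_, ?_, ?_⟩
  · -- trace preservation
    intro a
    rw [hψ]
    calc (∑ i, v i * (a : Matrix (Fin m) (Fin m) ℂ) * (v i)ᴴ).trace
        = ∑ i, ((v i)ᴴ * v i * (a : Matrix (Fin m) (Fin m) ℂ)).trace := by
          rw [Matrix.trace_sum]
          exact Finset.sum_congr rfl fun i _ => Matrix.trace_mul_cycle _ _ _
      _ = ((∑ i, (v i)ᴴ * v i) * (a : Matrix (Fin m) (Fin m) ℂ)).trace := by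
          rw [Finset.sum_mul, Matrix.trace_sum]
      _ = (a : Matrix (Fin m) (Fin m) ℂ).trace := by rw [hTP, Matrix.one_mul]
  · -- complete positivity
    intro l B hB
    set A : Matrix (Fin l × Fin m) (Fin l × Fin m) ℂ :=
      Matrix.of fun p q => (B p.1 q.1 : Matrix (Fin m) (Fin m) ℂ) p.2 q.2 with hA
    set W : Fin k → Matrix (Fin l × Fin n) (Fin l × Fin m) ℂ :=
      fun i => Matrix.of fun p q => if p.1 = q.1 then v i p.2 q.2 else 0 with hW
    have key : (Matrix.of fun (p q : Fin l × Fin n) =>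
        (ψ (B p.1 q.1 : Matrix (Fin m) (Fin m) ℂ)) p.2 q.2)
        = ∑ i, W i * A * (W i)ᴴ := by
      ext ⟨p1, p2⟩ ⟨q1, q2⟩
      simp only [Matrix.of_apply, hψ, Matrix.sum_apply]
      refine Finset.sum_congr rfl fun i _ => ?_
      simp only [Matrix.mul_apply, Matrix.conjTranspose_apply, Fintype.sum_prod_type, hW, hA,
        Matrix.of_apply, ite_mul, zero_mul, mul_ite, mul_zero, apply_ite (star : ℂ → ℂ), star_zero,
        Finset.sum_ite_irrel, Finset.sum_const_zero, Finset.sum_ite_eq, Finset.sum_ite_eq', Finset.mem_univ, if_true]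
    rw [key]
    exact psd_sum _ _ fun i _ => hB.mul_mul_conjTranspose_same (W i)
  · -- the operator space identity
    rw [dag_mulS, mulS_assoc, ← mulS_assoc (dag (Submodule.span ℂ (Set.range v))), hT,
      dag_commMod]
    apply le_antisymm
    · refine mulS_le fun c hc y hy => ?_
      refine mulS_induction (p := fun y => c * y ∈ R) ?_ ?_ ?_ ?_ hy
      · intro r hr c' hc'
        rw [← Matrix.mul_assoc]
        exact hRbimod c r c' hc hr hc'
      · simpa using R.zero_mem
      · intro x y hx hy; rw [Matrix.mul_add]; exact R.add_mem hx hy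
      · intro r x hx; rw [Matrix.mul_smul]; exact R.smul_mem _ hx
    · intro r hr
      have := mul_mem_mulS (one_mem_commMod M) (mul_mem_mulS hr (one_mem_commMod M))
      simpa using this
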